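/- Let M be a perfect matching of the infinite grid graph on Z^2, let {p, p+2e_i} (i in {1,2}) be a flippable pair of M, and let M' be the result of the hQDM move of M at this pair. Then for every height function h of M there exist δ in {4, −4} and a height function h' of M' such that h'(p) = h(p) + δ, h'(p+2e_i) = h(p+2e_i) − δ, and h'(x) = h(x) for every other plaquette x. Consequently the total height change ∑_x (h'(x) − h(x)) equals 0, and for each of the four parity classes of plaquettes (determined by the parities of the two coordinates of p), the sum of h' − h over the plaquettes of that class equals 0. -/

import Mathlib

/-!
Dimer configurations (perfect matchings) on the infinite square grid `ℤ × ℤ` and their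
height functions.

* A vertex is a point of `ℤ × ℤ`; the grid edge `(v, i)` joins `v` and `v + e i`, where
  `e 0 = (1,0)` and `e 1 = (0,1)`.
* A plaquette is a point `p : ℤ × ℤ`, regarded as the unit square with corners
  `p, p+e 0, p+e 1, p+e 0+e 1`.
* A height function for a perfect matching `M` assigns an integer to every plaquette so that
  crossing a grid edge, keeping the even endpoint of that edge on the right, the height
  increases by `1` across an unoccupied edge and decreases by `3` across an occupied one.
-/

open scoped Classical
noncomputable section

namespace HQDM

/-- Vertices (and also plaquettes) of the infinite grid. -/
abbrev V : Type := ℤ × ℤ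

/-- Grid edges: `(v, i)` is the edge joining `v` and `v + e i`. -/
abbrev E : Type := V × Fin 2

/-- The two unit vectors. -/
def e : Fin 2 → V := fun i => if i = 0 then (1, 0) else (0, 1)

/-- The endpoints of an edge. -/
def ends (ed : E) : Set V := {ed.1, ed.1 + e ed.2}

/-- `M` is a perfect matching of the grid graph: every vertex lies on exactly one edge of `M`. -/
def IsPM (M : Set E) : Prop := ∀ w : V, ∃! ed : E, ed ∈ M ∧ w ∈ ends ed

/-- Sign of a vertex: `1` on even vertices, `-1` on odd ones. -/
def eps (v : V) : ℤ := if Even (v.1 + v.2) then 1 else -1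

/-- `h : ℤ × ℤ → ℤ` is a height function for the matching `M`.  The two conditions encode, for
the horizontal edge `(v, 0)` (separating plaquette `v` above from plaquette `v - (0,1)` below)
and the vertical edge `(v, 1)` (separating plaquette `v` on the right from plaquette `v - (1,0)`
on the left), the rule: crossing a grid edge keeping its even endpoint on the right, the height
changes by `+1` across an unoccupied edge and by `-3` across an occupied one. -/
def IsHeight (M : Set E) (h : V → ℤ) : Prop :=
  ∀ v : V,
    h (v - (0, 1)) - h v = (if (v, (0 : Fin 2)) ∈ M then (-3 : ℤ) else 1) * eps v ∧
    h (v - (1, 0)) - h v = (if (v, (1 : Fin 2)) ∈ M then (3 : ℤ) else -1) * eps v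

/-- Plaquette `p` hosts a horizontal parallel dimer pair in `M`. -/
def HostsH (M : Set E) (p : V) : Prop :=
  (p, (0 : Fin 2)) ∈ M ∧ (p + (0, 1), (0 : Fin 2)) ∈ M

/-- Plaquette `p` hosts a vertical parallel dimer pair in `M`. -/
def HostsV (M : Set E) (p : V) : Prop :=
  (p, (1 : Fin 2)) ∈ M ∧ (p + (1, 0), (1 : Fin 2)) ∈ M

/-- Plaquette `p` hosts a parallel pair (horizontal or vertical); i.e. `p` is flippable. -/
def HostsPar (M : Set E) (p : V) : Prop := HostsH M p ∨ HostsV M p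

/-- The four boundary edges of the plaquette `p`. -/
def plaqEdges (p : V) : Set E :=
  {(p, (0 : Fin 2)), (p + (0, 1), (0 : Fin 2)), (p, (1 : Fin 2)), (p + (1, 0), (1 : Fin 2))}

/-- Flipping the plaquette `p`: the horizontal pair is replaced by the vertical one, or
vice versa (as a set operation, the symmetric difference with the plaquette's boundary). -/
def flip (M : Set E) (p : V) : Set E := symmDiff M (plaqEdges p)

/-- `{p, p + 2 e i}` is a flippable pair of `M`: one of the two plaquettes hosts a horizontal
pair and the other a vertical pair. -/
def FlipPair (M : Set E) (p : V) (i : Fin 2) : Prop :=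
  (HostsH M p ∧ HostsV M (p + e i + e i)) ∨ (HostsV M p ∧ HostsH M (p + e i + e i))

/-- The hQDM move at the pair `{p, p + 2 e i}`: both plaquettes are flipped. -/
def move (M : Set E) (p : V) (i : Fin 2) : Set E :=
  symmDiff M (plaqEdges p ∪ plaqEdges (p + e i + e i))

end HQDM

namespace HQDM

/-! ### Auxiliary lemmas -/

lemma e0 : e 0 = ((1,0) : V) := by simp [e]
lemma e1 : e 1 = ((0,1) : V) := by simp [e]

lemma e_val (i : Fin 2) : e i = ((1,0) : V) ∨ e i = ((0,1) : V) := by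
  fin_cases i
  · exact Or.inl e0
  · exact Or.inr e1

lemma ne01 : ((0,1) : V) ≠ 0 := by decide
lemma ne10 : ((1,0) : V) ≠ 0 := by decide

lemma eps_neg_of (v w : V) (hpar : (v.1 + v.2) % 2 ≠ (w.1 + w.2) % 2) : eps v = - eps w := by
  by_cases hE : Even (w.1 + w.2)
  · have : ¬ Even (v.1 + v.2) := by rw [Int.even_iff] at *; omega
    simp [eps, hE, this]
  · have : Even (v.1 + v.2) := by rw [Int.even_iff] at *; omega
    simp [eps, hE, this]

lemma eps_add01 (r : V) : eps (r + (0,1)) = - eps r := by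
  apply eps_neg_of; obtain ⟨a,b⟩ := r; simp; omega

lemma eps_add10 (r : V) : eps (r + (1,0)) = - eps r := by
  apply eps_neg_of; obtain ⟨a,b⟩ := r; simp; omega

lemma eps_vals (r : V) : eps r = 1 ∨ eps r = -1 := by
  unfold eps; split <;> simp

lemma eps_two (p : V) (i : Fin 2) : eps (p + e i + e i) = eps p := by
  rcases e_val i with h | h <;> rw [h]
  · rw [eps_add10, eps_add10]; ring
  · rw [eps_add01, eps_add01]; ring

lemma pm_unique {M : Set E} (hM : IsPM M) {ed ed' : E} (hed : ed ∈ M) {w : V}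
    (hw : w ∈ ends ed) (hw' : w ∈ ends ed') (hne : ed ≠ ed') : ed' ∉ M :=
  fun hed' => hne ((hM w).unique ⟨hed, hw⟩ ⟨hed', hw'⟩)

lemma mem_flip_iff {M : Set E} {p : V} {ed : E} :
    ed ∈ flip M p ↔ ((ed ∈ M ∧ ed ∉ plaqEdges p) ∨ (ed ∈ plaqEdges p ∧ ed ∉ M)) :=
  Set.mem_symmDiff

lemma mem_plaq_dir0 (v r : V) :
    ((v, (0 : Fin 2)) : E) ∈ plaqEdges r ↔ v = r ∨ v = r + (0,1) := by
  simp [plaqEdges, Prod.ext_iff]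

lemma mem_plaq_dir1 (v r : V) :
    ((v, (1 : Fin 2)) : E) ∈ plaqEdges r ↔ v = r ∨ v = r + (1,0) := by
  simp [plaqEdges, Prod.ext_iff]

lemma mem_flip_of_not_mem {M : Set E} {p : V} {ed : E} (h : ed ∉ plaqEdges p) :
    ed ∈ flip M p ↔ ed ∈ M := by
  rw [mem_flip_iff]; simp [h]

lemma plaq_disjoint (p : V) (i : Fin 2) :
    Disjoint (plaqEdges p) (plaqEdges (p + e i + e i)) := by
  rw [Set.disjoint_left]
  rintro ⟨⟨x,y⟩,j⟩ hp hq
  obtain ⟨a,b⟩ := p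
  rcases e_val i with h | h <;> rw [h] at hq <;> fin_cases j <;>
    simp [plaqEdges, Prod.ext_iff] at hp hq <;> omega

lemma flip_flip_eq_move (M : Set E) (p : V) (i : Fin 2) :
    flip (flip M p) (p + e i + e i) = move M p i := by
  rw [flip, flip, move, symmDiff_assoc, (plaq_disjoint p i).symmDiff_eq_sup]
  rfl

lemma flipH_height (M : Set E) (r : V) (h : V → ℤ)
    (h1 : ((r,(0:Fin 2)) : E) ∈ M) (h2 : ((r+(0,1),(0:Fin 2)) : E) ∈ M)
    (h3 : ((r,(1:Fin 2)) : E) ∉ M) (h4 : ((r+(1,0),(1:Fin 2)) : E) ∉ M)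
    (hh : IsHeight M h) :
    IsHeight (flip M r) (fun x => if x = r then h x - 4 * eps r else h x) := by
  intro v
  have H1 := (hh v).1
  have H2 := (hh v).2
  constructor
  · by_cases hv1 : v = r
    · subst hv1
      have hm : ((v,(0:Fin 2)) : E) ∉ flip M v := by
        rw [mem_flip_iff, mem_plaq_dir0]; simp [h1]
      have hne : v - (0,1) ≠ v := by simp [sub_eq_self, ne01]
      rw [if_pos h1] at H1
      simp [hm, hne]
      linarith
    · by_cases hv2 : v = r + (0,1)
      · subst hv2
        have hm : ((r + (0,1),(0:Fin 2)) : E) ∉ flip M r := by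
          rw [mem_flip_iff, mem_plaq_dir0]; simp [h2]
        have hne : r + (0,1) ≠ r := by simp [ne01]
        have hsub : r + (0,1) - (0,1) = r := by ring
        have heps : eps r = - eps (r + (0,1)) := by rw [eps_add01]; ring
        rw [if_pos h2, hsub] at H1
        simp [hm, hne, hsub]
        linarith [heps]
      · have hm : (((v,(0:Fin 2)) : E) ∈ flip M r) ↔ ((v,(0:Fin 2)) : E) ∈ M := by
          rw [mem_flip_iff, mem_plaq_dir0]; simp [hv1, hv2]
        have hne : v - (0,1) ≠ r := by
          intro hc; exact hv2 (by rw [← hc]; ring)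
        simp only [if_neg hne, if_neg hv1, hm]
        exact H1
  · by_cases hv1 : v = r
    · subst hv1
      have hm : ((v,(1:Fin 2)) : E) ∈ flip M v := by
        rw [mem_flip_iff, mem_plaq_dir1]; simp [h3]
      have hne : v - (1,0) ≠ v := by simp [sub_eq_self, ne10]
      rw [if_neg h3] at H2
      simp [hm, hne]
      linarith
    · by_cases hv2 : v = r + (1,0)
      · subst hv2
        have hm : ((r + (1,0),(1:Fin 2)) : E) ∈ flip M r := by
          rw [mem_flip_iff, mem_plaq_dir1]; simp [h4]
        have hne : r + (1,0) ≠ r := by simp [ne10]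
        have hsub : r + (1,0) - (1,0) = r := by ring
        have heps : eps r = - eps (r + (1,0)) := by rw [eps_add10]; ring
        rw [if_neg h4, hsub] at H2
        simp [hm, hne, hsub]
        linarith [heps]
      · have hm : (((v,(1:Fin 2)) : E) ∈ flip M r) ↔ ((v,(1:Fin 2)) : E) ∈ M := by
          rw [mem_flip_iff, mem_plaq_dir1]; simp [hv1, hv2]
        have hne : v - (1,0) ≠ r := by
          intro hc; exact hv2 (by rw [← hc]; ring)
        simp only [if_neg hne, if_neg hv1, hm]
        exact H2

lemma flipV_height (M : Set E) (r : V) (h : V → ℤ)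
    (h1 : ((r,(1:Fin 2)) : E) ∈ M) (h2 : ((r+(1,0),(1:Fin 2)) : E) ∈ M)
    (h3 : ((r,(0:Fin 2)) : E) ∉ M) (h4 : ((r+(0,1),(0:Fin 2)) : E) ∉ M)
    (hh : IsHeight M h) :
    IsHeight (flip M r) (fun x => if x = r then h x + 4 * eps r else h x) := by
  intro v
  have H1 := (hh v).1
  have H2 := (hh v).2
  constructor
  · by_cases hv1 : v = r
    · subst hv1
      have hm : ((v,(0:Fin 2)) : E) ∈ flip M v := by
        rw [mem_flip_iff, mem_plaq_dir0]; simp [h3]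
      have hne : v - (0,1) ≠ v := by simp [sub_eq_self, ne01]
      rw [if_neg h3] at H1
      simp [hm, hne]
      linarith
    · by_cases hv2 : v = r + (0,1)
      · subst hv2
        have hm : ((r + (0,1),(0:Fin 2)) : E) ∈ flip M r := by
          rw [mem_flip_iff, mem_plaq_dir0]; simp [h4]
        have hne : r + (0,1) ≠ r := by simp [ne01]
        have hsub : r + (0,1) - (0,1) = r := by ring
        have heps : eps r = - eps (r + (0,1)) := by rw [eps_add01]; ring
        rw [if_neg h4, hsub] at H1
        simp [hm, hne, hsub]
        linarith [heps]
      · have hm : (((v,(0:Fin 2)) : E) ∈ flip M r) ↔ ((v,(0:Fin 2)) : E) ∈ M := by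
          rw [mem_flip_iff, mem_plaq_dir0]; simp [hv1, hv2]
        have hne : v - (0,1) ≠ r := by
          intro hc; exact hv2 (by rw [← hc]; ring)
        simp only [if_neg hne, if_neg hv1, hm]
        exact H1
  · by_cases hv1 : v = r
    · subst hv1
      have hm : ((v,(1:Fin 2)) : E) ∉ flip M v := by
        rw [mem_flip_iff, mem_plaq_dir1]; simp [h1]
      have hne : v - (1,0) ≠ v := by simp [sub_eq_self, ne10]
      rw [if_pos h1] at H2
      simp [hm, hne]
      linarith
    · by_cases hv2 : v = r + (1,0)
      · subst hv2
        have hm : ((r + (1,0),(1:Fin 2)) : E) ∉ flip M r := by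
          rw [mem_flip_iff, mem_plaq_dir1]; simp [h2]
        have hne : r + (1,0) ≠ r := by simp [ne10]
        have hsub : r + (1,0) - (1,0) = r := by ring
        have heps : eps r = - eps (r + (1,0)) := by rw [eps_add10]; ring
        rw [if_pos h2, hsub] at H2
        simp [hm, hne, hsub]
        linarith [heps]
      · have hm : (((v,(1:Fin 2)) : E) ∈ flip M r) ↔ ((v,(1:Fin 2)) : E) ∈ M := by
          rw [mem_flip_iff, mem_plaq_dir1]; simp [hv1, hv2]
        have hne : v - (1,0) ≠ r := by
          intro hc; exact hv2 (by rw [← hc]; ring)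
        simp only [if_neg hne, if_neg hv1, hm]
        exact H2

lemma finsum_mem_pair_zero (g : V → ℤ) (a b : V) (hab : a ≠ b)
    (h0 : ∀ x, x ≠ a → x ≠ b → g x = 0) (hsum : g a + g b = 0)
    (S : Set V) (hS : a ∈ S ↔ b ∈ S) : (∑ᶠ x ∈ S, g x) = 0 := by
  rw [finsum_mem_def]
  have hsupp : Function.support (S.indicator g) ⊆ (({a, b} : Finset V) : Set V) := by
    intro x hx
    simp only [Function.mem_support] at hx
    by_contra hx'
    simp only [Finset.coe_insert, Finset.coe_singleton, Set.mem_insert_iff,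
      Set.mem_singleton_iff, not_or] at hx'
    exact hx (by simp [Set.indicator_apply, h0 x hx'.1 hx'.2])
  rw [finsum_eq_sum_of_support_subset _ hsupp, Finset.sum_pair hab]
  by_cases ha : a ∈ S
  · rw [Set.indicator_of_mem ha, Set.indicator_of_mem (hS.mp ha)]; exact hsum
  · rw [Set.indicator_of_notMem ha, Set.indicator_of_notMem (fun hb => ha (hS.mpr hb))]; ring

lemma two_zmod : ((2 : ℤ) : ZMod 2) = 0 := by decide

lemma conclusion_aux (p q : V) (h h' : V → ℤ) (δ : ℤ) (hpq : p ≠ q)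
    (hmod1 : ((q.1 : ZMod 2)) = ((p.1 : ZMod 2))) (hmod2 : ((q.2 : ZMod 2)) = ((p.2 : ZMod 2)))
    (hp' : h' p = h p + δ) (hq' : h' q = h q - δ)
    (hoth : ∀ x, x ≠ p → x ≠ q → h' x = h x) :
    (∑ᶠ x : V, (h' x - h x)) = 0 ∧
    (∀ s t : ZMod 2,
      (∑ᶠ x ∈ {y : V | ((y.1 : ZMod 2) = s ∧ (y.2 : ZMod 2) = t)}, (h' x - h x)) = 0) := by
  have h0 : ∀ x, x ≠ p → x ≠ q → h' x - h x = 0 := fun x hx1 hx2 => by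
    rw [hoth x hx1 hx2]; ring
  have hsum : (h' p - h p) + (h' q - h q) = 0 := by rw [hp', hq']; ring
  constructor
  · rw [← finsum_mem_univ]
    exact finsum_mem_pair_zero _ p q hpq h0 hsum _ (by simp)
  · intro s t
    exact finsum_mem_pair_zero _ p q hpq h0 hsum _
      (by simp only [Set.mem_setOf_eq, hmod1, hmod2])

end HQDM

namespace HQDM

/-- The hQDM move at a flippable pair `{p, p + 2 e i}` changes the heights only
at the two flipped plaquettes, by `+δ` and `-δ` respectively with `δ ∈ {4, -4}`.  Consequently
the total height is conserved, and so is the total height of each of the four parity classes of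
plaquettes. -/
theorem hQDM_move_conserves_sublattice_heights (M : Set E) (hM : IsPM M) (p : V) (i : Fin 2)
    (hp : FlipPair M p i) (h : V → ℤ) (hh : IsHeight M h) :
    ∃ δ ∈ ({4, -4} : Set ℤ), ∃ h' : V → ℤ,
      IsHeight (move M p i) h' ∧
      h' p = h p + δ ∧
      h' (p + e i + e i) = h (p + e i + e i) - δ ∧
      (∀ x : V, x ≠ p → x ≠ p + e i + e i → h' x = h x) ∧
      (∑ᶠ x : V, (h' x - h x)) = 0 ∧
      (∀ s t : ZMod 2,
        (∑ᶠ x ∈ {y : V | ((y.1 : ZMod 2) = s ∧ (y.2 : ZMod 2) = t)}, (h' x - h x)) = 0) := by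
  obtain ⟨hH, hV⟩ | ⟨hV, hH⟩ := hp
  · -- p hosts horizontal, q := p + e i + e i hosts vertical
    set q := p + e i + e i with hqdef
    have hpq : p ≠ q := by
      have hne1 : ((1,0):V) + (1,0) ≠ 0 := by decide
      have hne2 : ((0,1):V) + (0,1) ≠ 0 := by decide
      rcases e_val i with hev | hev <;> rw [hqdef, hev, add_assoc]
      · exact fun hc => hne1 (left_eq_add.mp hc)
      · exact fun hc => hne2 (left_eq_add.mp hc)
    have np3 : ((p,(1:Fin 2)) : E) ∉ M :=
      pm_unique hM hH.1 (w := p) (by simp [ends]) (by simp [ends]) (by simp [Prod.ext_iff])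
    have np4 : ((p+(1,0),(1:Fin 2)) : E) ∉ M :=
      pm_unique hM hH.1 (w := p + (1,0)) (by simp [ends, e0]) (by simp [ends]) (by simp [Prod.ext_iff])
    have nq3 : ((q,(0:Fin 2)) : E) ∉ M :=
      pm_unique hM hV.1 (w := q) (by simp [ends]) (by simp [ends]) (by simp [Prod.ext_iff])
    have nq4 : ((q+(0,1),(0:Fin 2)) : E) ∉ M :=
      pm_unique hM hV.1 (w := q + (0,1)) (by simp [ends, e1]) (by simp [ends]) (by simp [Prod.ext_iff])
    have h₁ := flipH_height M p h hH.1 hH.2 np3 np4 hh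
    have dq := plaq_disjoint p i
    have t1 : ((q,(1:Fin 2)) : E) ∈ flip M p :=
      (mem_flip_of_not_mem (Set.disjoint_right.mp dq (by simp [plaqEdges, hqdef]))).mpr hV.1
    have t2 : ((q+(1,0),(1:Fin 2)) : E) ∈ flip M p :=
      (mem_flip_of_not_mem (Set.disjoint_right.mp dq (by simp [plaqEdges, hqdef]))).mpr hV.2
    have t3 : ((q,(0:Fin 2)) : E) ∉ flip M p := fun hc =>
      nq3 ((mem_flip_of_not_mem (Set.disjoint_right.mp dq (by simp [plaqEdges, hqdef]))).mp hc)
    have t4 : ((q+(0,1),(0:Fin 2)) : E) ∉ flip M p := fun hc =>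
      nq4 ((mem_flip_of_not_mem (Set.disjoint_right.mp dq (by simp [plaqEdges, hqdef]))).mp hc)
    have h₂ := flipV_height (flip M p) q _ t1 t2 t3 t4 h₁
    rw [flip_flip_eq_move] at h₂
    have hepsq : eps q = eps p := eps_two p i
    refine ⟨-4 * eps p, ?_, _, h₂, ?_, ?_, ?_, ?_⟩
    · rcases eps_vals p with hv | hv <;> simp [hv]
    · simp [hpq]; try ring
    · simp [hpq.symm, hepsq]; try ring
    · intro x hx1 hx2
      simp [hx1, hx2]
    · have hmod : ((q.1 : ZMod 2)) = ((p.1 : ZMod 2)) ∧ ((q.2 : ZMod 2)) = ((p.2 : ZMod 2)) := by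
        rcases e_val i with hev | hev <;> rw [hqdef, hev] <;>
          constructor <;> push_cast [Prod.fst_add, Prod.snd_add] <;>
          simp [add_assoc, show ((1:ZMod 2)) + 1 = 0 from by decide]
      exact conclusion_aux p q h _ (-4 * eps p) hpq hmod.1 hmod.2
        (by simp [hpq]; try ring) (by simp [hpq.symm, hepsq]; try ring) (fun x hx1 hx2 => by simp [hx1, hx2])
  · -- p hosts vertical, q hosts horizontal
    set q := p + e i + e i with hqdef
    have hpq : p ≠ q := by
      have hne1 : ((1,0):V) + (1,0) ≠ 0 := by decide
      have hne2 : ((0,1):V) + (0,1) ≠ 0 := by decide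
      rcases e_val i with hev | hev <;> rw [hqdef, hev, add_assoc]
      · exact fun hc => hne1 (left_eq_add.mp hc)
      · exact fun hc => hne2 (left_eq_add.mp hc)
    have np3 : ((p,(0:Fin 2)) : E) ∉ M :=
      pm_unique hM hV.1 (w := p) (by simp [ends]) (by simp [ends]) (by simp [Prod.ext_iff])
    have np4 : ((p+(0,1),(0:Fin 2)) : E) ∉ M :=
      pm_unique hM hV.1 (w := p + (0,1)) (by simp [ends, e1]) (by simp [ends]) (by simp [Prod.ext_iff])
    have nq3 : ((q,(1:Fin 2)) : E) ∉ M :=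
      pm_unique hM hH.1 (w := q) (by simp [ends]) (by simp [ends]) (by simp [Prod.ext_iff])
    have nq4 : ((q+(1,0),(1:Fin 2)) : E) ∉ M :=
      pm_unique hM hH.1 (w := q + (1,0)) (by simp [ends, e0]) (by simp [ends]) (by simp [Prod.ext_iff])
    have h₁ := flipV_height M p h hV.1 hV.2 np3 np4 hh
    have dq := plaq_disjoint p i
    have t1 : ((q,(0:Fin 2)) : E) ∈ flip M p :=
      (mem_flip_of_not_mem (Set.disjoint_right.mp dq (by simp [plaqEdges, hqdef]))).mpr hH.1
    have t2 : ((q+(0,1),(0:Fin 2)) : E) ∈ flip M p :=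
      (mem_flip_of_not_mem (Set.disjoint_right.mp dq (by simp [plaqEdges, hqdef]))).mpr hH.2
    have t3 : ((q,(1:Fin 2)) : E) ∉ flip M p := fun hc =>
      nq3 ((mem_flip_of_not_mem (Set.disjoint_right.mp dq (by simp [plaqEdges, hqdef]))).mp hc)
    have t4 : ((q+(1,0),(1:Fin 2)) : E) ∉ flip M p := fun hc =>
      nq4 ((mem_flip_of_not_mem (Set.disjoint_right.mp dq (by simp [plaqEdges, hqdef]))).mp hc)
    have h₂ := flipH_height (flip M p) q _ t1 t2 t3 t4 h₁
    rw [flip_flip_eq_move] at h₂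
    have hepsq : eps q = eps p := eps_two p i
    refine ⟨4 * eps p, ?_, _, h₂, ?_, ?_, ?_, ?_⟩
    · rcases eps_vals p with hv | hv <;> simp [hv]
    · simp [hpq]; try ring
    · simp [hpq.symm, hepsq]; try ring
    · intro x hx1 hx2
      simp [hx1, hx2]
    · have hmod : ((q.1 : ZMod 2)) = ((p.1 : ZMod 2)) ∧ ((q.2 : ZMod 2)) = ((p.2 : ZMod 2)) := by
        rcases e_val i with hev | hev <;> rw [hqdef, hev] <;>
          constructor <;> push_cast [Prod.fst_add, Prod.snd_add] <;>
          simp [add_assoc, show ((1:ZMod 2)) + 1 = 0 from by decide]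
      exact conclusion_aux p q h _ (4 * eps p) hpq hmod.1 hmod.2
        (by simp [hpq]; try ring) (by simp [hpq.symm, hepsq]; try ring) (fun x hx1 hx2 => by simp [hx1, hx2])


end HQDM
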